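/- Fix an integer N ≥ 1 and let S and β_k be as defined in the context. Let k ≥ 1 be an index with k ≡ 1 (mod N). Then every element x of S lying in the interval [β_k/(N+1), β_k) has fractional part x − ⌊x⌋ at least 1/N; in particular the fractional part of x does not lie in Q_0 = [0, 1/N). -/

import Mathlib

open MeasureTheory

noncomputable section

/-- The geometric sums `β_k = Σ_{j=0}^{k-1} (N+1)^j`. -/
def beta (N k : ℕ) : ℕ := ∑ j ∈ Finset.range k, (N + 1) ^ j

/-- The deleted intervals `Q_i = [i/N, (i+1)/N)`. -/
def Qset (N i : ℕ) : Set ℝ := Set.Ico ((i : ℝ) / N) (((i : ℝ) + 1) / N)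

/-- `R_i = [0,1) \ Q_i`. -/
def Rset (N i : ℕ) : Set ℝ := Set.Ico (0 : ℝ) 1 \ Qset N i

/-- For `m ≥ 0`, the unique `k` with `β_k ≤ m < β_{k+1}`. -/
def kIdx (N m : ℕ) : ℕ := Nat.findGreatest (fun k => beta N k ≤ m) m

/-- `S_m` for nonnegative `m` : `S_0 = R_0`, and `S_m = m + R_{(k mod N)}` for `m > 0`. -/
def Spos (N m : ℕ) : Set ℝ :=
  if m = 0 then Rset N 0 else (fun x => x + (m : ℝ)) '' Rset N (kIdx N m % N)

/-- `S_m` for all integers `m`: for `m < 0`, `S_m = 2m + S_{|m|}`. -/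
def Sm (N : ℕ) (m : ℤ) : Set ℝ :=
  if 0 ≤ m then Spos N m.toNat else (fun x => x + 2 * (m : ℝ)) '' Spos N m.natAbs

/-- The set `S = ⋃_{m ∈ ℤ} S_m`. -/
def SetS (N : ℕ) : Set ℝ := ⋃ m : ℤ, Sm N m

/-!
An element of `S` in `[β_k/(N+1), β_k)` is nonnegative, so it lies in a block `S_m = m + R_i`
with `m ≥ 0`. Since `β_k = (N+1) β_{k-1} + 1`, the lower bound `β_k/(N+1)` forces `m ≥ β_{k-1}`,
so `β_{k-1} ≤ m < β_k` and `i = (k-1) mod N = 0`. The fractional part of `x` is then a point of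
`R_0 = [1/N, 1)`.
-/

lemma beta_succ (N k : ℕ) : beta N (k + 1) = (N + 1) * beta N k + 1 := by
  simp [beta, geom_sum_succ]

lemma beta_mono (N : ℕ) : Monotone (beta N) := fun _ _ h =>
  Finset.sum_le_sum_of_subset (Finset.range_subset_range.mpr h)

lemma le_beta (N k : ℕ) : k ≤ beta N k :=
  calc k = ∑ _j ∈ Finset.range k, 1 := by simp
  _ ≤ beta N k := Finset.sum_le_sum fun _ _ => Nat.one_le_pow _ _ N.succ_pos

lemma kIdx_eq {N m k : ℕ} (h₁ : beta N k ≤ m) (h₂ : m < beta N (k + 1)) : kIdx N m = k := by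
  rw [kIdx, Nat.findGreatest_eq_iff]
  refine ⟨(le_beta N k).trans h₁, fun _ => h₁, fun n hn _ hb => ?_⟩
  exact absurd ((beta_mono N hn).trans hb) (not_le.mpr h₂)

lemma kIdx_eq_of_mem_Ico {N n k : ℕ} {x : ℝ} (hxn : x ∈ Set.Ico (n : ℝ) (n + 1))
    (hxI : x ∈ Set.Ico ((beta N (k + 1) : ℝ) / ((N : ℝ) + 1)) (beta N (k + 1) : ℝ)) :
    kIdx N n = k := by
  have hN : (0 : ℝ) < N + 1 := by positivity
  have hlt : (beta N (k + 1) : ℝ) < (n + 1) * (N + 1) :=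
    calc (beta N (k + 1) : ℝ) ≤ x * (N + 1) := (div_le_iff₀ hN).mp hxI.1
    _ < (n + 1) * (N + 1) := mul_lt_mul_of_pos_right hxn.2 hN
  have hlt' : (N + 1) * beta N k + 1 < (n + 1) * (N + 1) := by
    rw [← beta_succ]; exact_mod_cast hlt
  have hn : n < beta N (k + 1) := by exact_mod_cast hxn.1.trans_lt hxI.2
  exact kIdx_eq (by nlinarith) hn

lemma kIdx_zero (N : ℕ) : kIdx N 0 = 0 := Nat.findGreatest_zero

lemma Spos_eq_image (N n : ℕ) : Spos N n = (· + (n : ℝ)) '' Rset N (kIdx N n % N) := by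
  rcases eq_or_ne n 0 with rfl | hn
  · simp [Spos, kIdx_zero]
  · rw [Spos, if_neg hn]

lemma Spos_subset_Ico (N n : ℕ) : Spos N n ⊆ Set.Ico (n : ℝ) (n + 1) := by
  rw [Spos_eq_image]
  rintro _ ⟨r, ⟨⟨hr₀, hr₁⟩, _⟩, rfl⟩
  constructor <;> linarith

lemma fract_mem_Rset_of_mem_Spos {N n : ℕ} {x : ℝ} (hx : x ∈ Spos N n) :
    Int.fract x ∈ Rset N (kIdx N n % N) := by
  rw [Spos_eq_image] at hx
  obtain ⟨r, hr, rfl⟩ := hx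
  rwa [Int.fract_add_natCast, Int.fract_eq_self.mpr hr.1]

lemma Sm_subset_Ico (N : ℕ) (m : ℤ) : Sm N m ⊆ Set.Ico (m : ℝ) (m + 1) := by
  rw [Sm]
  split_ifs with hm
  · have hcast : ((m.toNat : ℕ) : ℝ) = m := by exact_mod_cast Int.toNat_of_nonneg hm
    simpa only [hcast] using Spos_subset_Ico N m.toNat
  · have hcast : ((m.natAbs : ℕ) : ℝ) = -m := by
      rw [Nat.cast_natAbs, Int.cast_abs, abs_of_neg (by exact_mod_cast not_le.mp hm)]
    rintro _ ⟨y, hy, rfl⟩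
    have hy := Spos_subset_Ico N m.natAbs hy
    rw [hcast] at hy
    constructor <;> linarith [hy.1, hy.2]

lemma one_div_le_of_mem_Rset_zero {N : ℕ} {r : ℝ} (hr : r ∈ Rset N 0) : 1 / (N : ℝ) ≤ r := by
  obtain ⟨⟨h₀, _⟩, hq⟩ := hr
  by_contra hlt
  exact hq ⟨by simpa using h₀, by simpa using not_le.mp hlt⟩

theorem stmt_12_general (N : ℕ) (k : ℕ) (hk : 1 ≤ k) (hkmod : k % N = 1 % N)
    (x : ℝ) (hx : x ∈ SetS N)
    (hxI : x ∈ Set.Ico ((beta N k : ℝ) / ((N : ℝ) + 1)) ((beta N k : ℝ))) :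
    1 / (N : ℝ) ≤ Int.fract x ∧ Int.fract x ∉ Qset N 0 := by
  obtain ⟨m, hm⟩ := Set.mem_iUnion.mp hx
  have hm₀ : 0 ≤ m := by
    have hx₀ : (0 : ℝ) ≤ x := le_trans (by positivity) hxI.1
    have : (-1 : ℝ) < m := by linarith [(Sm_subset_Ico N m hm).2]
    have : (-1 : ℤ) < m := by exact_mod_cast this
    omega
  lift m to ℕ using hm₀
  rw [Sm, if_pos (Int.natCast_nonneg m), Int.toNat_natCast] at hm
  obtain ⟨c, rfl⟩ : ∃ c, k = c + 1 := ⟨k - 1, by omega⟩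
  have hc : c % N = 0 := Nat.ModEq.add_right_cancel' 1 hkmod
  have hidx : kIdx N m = c := kIdx_eq_of_mem_Ico (Spos_subset_Ico N m hm) hxI
  have hfract : Int.fract x ∈ Rset N 0 := by
    simpa only [hidx, hc] using fract_mem_Rset_of_mem_Spos hm
  exact ⟨one_div_le_of_mem_Rset_zero hfract, hfract.2⟩

/-- If `k ≥ 1` and `k ≡ 1 (mod N)`, then every element of `S` in `[β_k/(N+1), β_k)`
has fractional part at least `1/N`; in particular its fractional part is not in
`Q_0 = [0, 1/N)`. -/
theorem stmt_12 (N : ℕ) (hN : 1 ≤ N) (k : ℕ) (hk : 1 ≤ k) (hkmod : k % N = 1 % N)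
    (x : ℝ) (hx : x ∈ SetS N)
    (hxI : x ∈ Set.Ico ((beta N k : ℝ) / ((N : ℝ) + 1)) ((beta N k : ℝ))) :
    1 / (N : ℝ) ≤ Int.fract x ∧ Int.fract x ∉ Qset N 0 :=
  stmt_12_general N k hk hkmod x hx hxI
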